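/- Let α ∈ (0,1), 0 < a < 1, and let v : [a,1] → ℝ be a C¹ function with v(a) = v(1) = 0. Then ∫_a^1 x^(α-2) v(x)² dx ≤ (4/(1-α)²) ∫_a^1 x^α (v'(x))² dx. -/

import Mathlib

/-!
Differentiating `x ^ (α - 1) * v x ^ 2` and integrating over `[a, b]` gives
`(α - 1) ∫ x^(α-2) v² + 2 ∫ x^(α-1) v v' = b^(α-1) v(b)² - a^(α-1) v(a)²`.
When `v a = 0` and `α < 1` this yields `(1 - α) ∫ x^(α-2) v² ≤ 2 ∫ x^(α-1) v v'`, and the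
weighted Young inequality `2 x^(α-1) v v' ≤ ε x^(α-2) v² + ε⁻¹ x^α v'²` with `ε = (1 - α) / 2`
absorbs the first term on the right into the left-hand side.
-/

open MeasureTheory intervalIntegral Set

lemma two_mul_rpow_mul_le {x ε : ℝ} (hx : 0 < x) (hε : 0 < ε) (α u w : ℝ) :
    2 * (x ^ (α - 1) * (u * w)) ≤ ε * (x ^ (α - 2) * u ^ 2) + ε⁻¹ * (x ^ α * w ^ 2) := by
  have hsub : x ^ (α - 2) = x ^ (α - 1) / x := by
    rw [← Real.rpow_sub_one hx.ne']; ring_nf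
  have hadd : x ^ α = x ^ (α - 1) * x := by
    rw [← Real.rpow_add_one hx.ne']; ring_nf
  have hp : 0 ≤ x ^ (α - 1) := Real.rpow_nonneg hx.le _
  rw [hsub, hadd]
  have key : 0 ≤ x ^ (α - 1) * (ε * u - x * w) ^ 2 / (ε * x) := by positivity
  have expand : x ^ (α - 1) * (ε * u - x * w) ^ 2 / (ε * x) =
      ε * (x ^ (α - 1) / x * u ^ 2) + ε⁻¹ * (x ^ (α - 1) * x * w ^ 2) -
        2 * (x ^ (α - 1) * (u * w)) := by
    field_simp; ring
  linarith

lemma intervalIntegrable_rpow_mul {a b p : ℝ} {f : ℝ → ℝ} (ha : 0 < a) (hab : a ≤ b)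
    (hf : ContinuousOn f (Icc a b)) : IntervalIntegrable (fun x => x ^ p * f x) volume a b := by
  refine ContinuousOn.intervalIntegrable ?_
  rw [uIcc_of_le hab]
  exact (continuousOn_id.rpow_const fun x hx => Or.inl (ha.trans_le hx.1).ne').mul hf

section Hardy

variable {α a b : ℝ} {v v' : ℝ → ℝ}

lemma integral_rpow_mul_sq_add_rpow_mul_deriv (ha : 0 < a) (hab : a ≤ b)
    (hv : ∀ x ∈ Icc a b, HasDerivAt v (v' x) x) (hv' : ContinuousOn v' (Icc a b)) :
    (α - 1) * (∫ x in a..b, x ^ (α - 2) * v x ^ 2) +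
        2 * ∫ x in a..b, x ^ (α - 1) * (v x * v' x) =
      b ^ (α - 1) * v b ^ 2 - a ^ (α - 1) * v a ^ 2 := by
  have hvc : ContinuousOn v (Icc a b) := HasDerivAt.continuousOn hv
  have hI : IntervalIntegrable (fun x => x ^ (α - 2) * v x ^ 2) volume a b :=
    intervalIntegrable_rpow_mul ha hab (hvc.pow 2)
  have hK : IntervalIntegrable (fun x => x ^ (α - 1) * (v x * v' x)) volume a b :=
    intervalIntegrable_rpow_mul ha hab (hvc.mul hv')
  have hderiv : ∀ x ∈ uIcc a b, HasDerivAt (fun y => y ^ (α - 1) * v y ^ 2)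
      ((α - 1) * (x ^ (α - 2) * v x ^ 2) + 2 * (x ^ (α - 1) * (v x * v' x))) x := by
    intro x hx
    rw [uIcc_of_le hab] at hx
    have hpow := Real.hasDerivAt_rpow_const (p := α - 1) (Or.inl (ha.trans_le hx.1).ne')
    refine (hpow.fun_mul ((hv x hx).fun_pow 2)).congr_deriv ?_
    rw [show α - 1 - 1 = α - 2 by ring]
    ring
  rw [← intervalIntegral.integral_const_mul, ← intervalIntegral.integral_const_mul,
    ← integral_add (hI.const_mul _) (hK.const_mul _),
    integral_eq_sub_of_hasDerivAt hderiv ((hI.const_mul _).add (hK.const_mul _))]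

lemma one_sub_mul_integral_rpow_mul_sq_le (ha : 0 < a) (hab : a ≤ b)
    (hv : ∀ x ∈ Icc a b, HasDerivAt v (v' x) x) (hv' : ContinuousOn v' (Icc a b))
    (hva : v a = 0) :
    (1 - α) * (∫ x in a..b, x ^ (α - 2) * v x ^ 2) ≤
      2 * ∫ x in a..b, x ^ (α - 1) * (v x * v' x) := by
  have hid := integral_rpow_mul_sq_add_rpow_mul_deriv (α := α) ha hab hv hv'
  have hb : 0 ≤ b ^ (α - 1) * v b ^ 2 :=
    mul_nonneg (Real.rpow_nonneg (ha.le.trans hab) _) (sq_nonneg _)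
  rw [hva] at hid
  linarith

lemma two_mul_integral_rpow_mul_deriv_le {ε : ℝ} (hε : 0 < ε) (ha : 0 < a) (hab : a ≤ b)
    (hv : ∀ x ∈ Icc a b, HasDerivAt v (v' x) x) (hv' : ContinuousOn v' (Icc a b)) :
    2 * (∫ x in a..b, x ^ (α - 1) * (v x * v' x)) ≤
      ε * (∫ x in a..b, x ^ (α - 2) * v x ^ 2) + ε⁻¹ * ∫ x in a..b, x ^ α * v' x ^ 2 := by
  have hvc : ContinuousOn v (Icc a b) := HasDerivAt.continuousOn hv
  have hI : IntervalIntegrable (fun x => x ^ (α - 2) * v x ^ 2) volume a b :=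
    intervalIntegrable_rpow_mul ha hab (hvc.pow 2)
  have hJ : IntervalIntegrable (fun x => x ^ α * v' x ^ 2) volume a b :=
    intervalIntegrable_rpow_mul ha hab (hv'.pow 2)
  have hK : IntervalIntegrable (fun x => x ^ (α - 1) * (v x * v' x)) volume a b :=
    intervalIntegrable_rpow_mul ha hab (hvc.mul hv')
  rw [← intervalIntegral.integral_const_mul, ← intervalIntegral.integral_const_mul,
    ← intervalIntegral.integral_const_mul, ← integral_add (hI.const_mul _) (hJ.const_mul _)]
  exact integral_mono_on hab (hK.const_mul _) ((hI.const_mul _).add (hJ.const_mul _))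
    fun x hx => two_mul_rpow_mul_le (ha.trans_le hx.1) hε α (v x) (v' x)

theorem integral_rpow_mul_sq_le_of_left_eq_zero (hα : α < 1) (ha : 0 < a) (hab : a ≤ b)
    (hv : ∀ x ∈ Icc a b, HasDerivAt v (v' x) x) (hv' : ContinuousOn v' (Icc a b))
    (hva : v a = 0) :
    ∫ x in a..b, x ^ (α - 2) * v x ^ 2 ≤ 4 / (1 - α) ^ 2 * ∫ x in a..b, x ^ α * v' x ^ 2 := by
  set I := ∫ x in a..b, x ^ (α - 2) * v x ^ 2
  set J := ∫ x in a..b, x ^ α * v' x ^ 2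
  have h1α : 0 < 1 - α := by linarith
  have lower := one_sub_mul_integral_rpow_mul_sq_le (α := α) ha hab hv hv' hva
  have upper := two_mul_integral_rpow_mul_deriv_le (α := α) (half_pos h1α) ha hab hv hv'
  have absorbed : (1 - α) / 2 * I ≤ 2 / (1 - α) * J := by
    rw [inv_div] at upper; linarith
  calc I = 2 / (1 - α) * ((1 - α) / 2 * I) := by field_simp
    _ ≤ 2 / (1 - α) * (2 / (1 - α) * J) := by gcongr
    _ = 4 / (1 - α) ^ 2 * J := by field_simp; ring

end Hardy

theorem hardy_interval_away_from_zero_general (α a : ℝ) (hα : α ∈ Set.Ioo (0:ℝ) 1)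
    (ha : 0 < a) (ha1 : a < 1)
    (v : ℝ → ℝ) (hv : ContDiff ℝ 1 v) (hva : v a = 0) :
    ∫ x in a..1, x ^ (α - 2) * (v x) ^ 2 ≤
      (4 / (1 - α) ^ 2) * ∫ x in a..1, x ^ α * (deriv v x) ^ 2 :=
  integral_rpow_mul_sq_le_of_left_eq_zero hα.2 ha ha1.le
    (fun x _ => (hv.differentiable one_ne_zero x).hasDerivAt)
    (hv.continuous_deriv le_rfl).continuousOn hva

theorem hardy_interval_away_from_zero (α a : ℝ) (hα : α ∈ Set.Ioo (0:ℝ) 1)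
    (ha : 0 < a) (ha1 : a < 1)
    (v : ℝ → ℝ) (hv : ContDiff ℝ 1 v) (hva : v a = 0) (hv1 : v 1 = 0) :
    ∫ x in a..1, x ^ (α - 2) * (v x) ^ 2 ≤
      (4 / (1 - α) ^ 2) * ∫ x in a..1, x ^ α * (deriv v x) ^ 2 :=
  hardy_interval_away_from_zero_general α a hα ha ha1 v hv hva
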